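/- arXiv:2507.13947 — 3 statements merged into one kernel-verified Lean document; each statement's English description precedes it below -/
import Mathlib

section
/- Let ν, ω : [0,∞) → (0,∞) be differentiable with ν(t) > 1 for all t, and let h(x,t) = (ω(t)^{ν(t)} / Γ(ν(t))) x^{−(ν(t)+1)} e^{−ω(t)/x} be the corresponding time-dependent inverse Gamma density. Then for every t ≥ 0, ∫₀^∞ |∂_t h(x,t)| dx ≤ |ν'(t)| A(t) + |ω'(t)| B(t), where A(t) = |log ω(t) − ψ(ν(t))| + 1 + ν(t)/(e·ω(t)) + ω(t)/(ν(t) − 1) and B(t) = 2 ν(t)/ω(t), with ψ(z) = Γ'(z)/Γ(z) the digamma function and e Euler's number. -/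
open Real MeasureTheory

/-- The digamma function `ψ(z) = Γ'(z)/Γ(z)`, the logarithmic derivative of the Gamma
function. -/
noncomputable def digamma (z : ℝ) : ℝ := deriv Real.Gamma z / Real.Gamma z

/-!
Differentiating the density in `t` gives
`∂ₜh = h · (ν' (log ω - ψ(ν) - log x) + ω' (ν / ω - x⁻¹))`.
With `|log x| ≤ x⁻¹ / e + x` this yields `|∂ₜh| ≤ h · (α + β x⁻¹ + γ x)`, and integrating uses the
moments `∫ h = 1`, `∫ x⁻¹ h = ν / ω` and `∫ x h = ω / (ν - 1)` of the inverse Gamma law. All three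
reduce, under `y = x⁻¹`, to the Gamma integral `∫ y ^ (s - 1) e ^ (-c y) dy = Γ(s) / c ^ s`.
-/

open Set

lemma log_le_div_exp {y : ℝ} (hy : 0 < y) : log y ≤ y / exp 1 := by
  have h := log_le_sub_one_of_pos (div_pos hy (exp_pos 1))
  rw [log_div hy.ne' (exp_pos 1).ne', log_exp] at h
  linarith

lemma abs_log_le_inv_div_exp_add_self {x : ℝ} (hx : 0 < x) : |log x| ≤ x⁻¹ / exp 1 + x := by
  rw [abs_le]
  constructor
  · linarith [log_le_div_exp (inv_pos.2 hx), log_inv x]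
  · linarith [log_le_self hx.le, inv_pos.2 hx, exp_pos 1, div_pos (inv_pos.2 hx) (exp_pos 1)]

-- The substitution `y = x⁻¹`, in the shape of `integral_comp_rpow_Ioi` with `p = -1`.
lemma eqOn_comp_inv_gammaIntegrand (s c : ℝ) :
    EqOn (fun x : ℝ => (|(-1 : ℝ)| * x ^ ((-1 : ℝ) - 1)) •
        (fun y : ℝ => y ^ (s - 1) * exp (-(c * y))) (x ^ (-1 : ℝ)))
      (fun x : ℝ => x ^ (-(s + 1)) * exp (-c / x)) (Ioi 0) := by
  intro x hx
  simp only [smul_eq_mul, abs_neg, abs_one, one_mul]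
  rw [← rpow_mul (le_of_lt hx), ← mul_assoc, ← rpow_add hx, rpow_neg_one, div_eq_mul_inv, neg_mul]
  ring_nf

lemma integrableOn_rpow_neg_mul_exp_neg_div {s c : ℝ} (hs : 0 < s) (hc : 0 < c) :
    IntegrableOn (fun x : ℝ => x ^ (-(s + 1)) * exp (-c / x)) (Ioi 0) := by
  have hGamma : IntegrableOn (fun y : ℝ => y ^ (s - 1) * exp (-(c * y))) (Ioi 0) := by
    simpa [neg_mul] using integrableOn_rpow_mul_exp_neg_mul_rpow (p := 1) (by linarith) one_pos hc
  exact ((integrableOn_Ioi_comp_rpow_iff _ (by norm_num)).2 hGamma).congr_fun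
    (eqOn_comp_inv_gammaIntegrand s c) measurableSet_Ioi

lemma integral_rpow_neg_mul_exp_neg_div {s c : ℝ} (hs : 0 < s) (hc : 0 < c) :
    ∫ x in Ioi 0, x ^ (-(s + 1)) * exp (-c / x) = Gamma s / c ^ s := by
  rw [← setIntegral_congr_fun measurableSet_Ioi (eqOn_comp_inv_gammaIntegrand s c),
    integral_comp_rpow_Ioi (fun y : ℝ => y ^ (s - 1) * exp (-(c * y))) (by norm_num : (-1 : ℝ) ≠ 0),
    integral_rpow_mul_exp_neg_mul_Ioi hs hc,
    div_rpow zero_le_one hc.le, one_rpow]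
  ring

noncomputable def invGammaPDF (s c x : ℝ) : ℝ :=
  c ^ s / Gamma s * x ^ (-(s + 1)) * exp (-c / x)

lemma invGammaPDF_nonneg {s c x : ℝ} (hs : 0 ≤ s) (hc : 0 ≤ c) (hx : 0 ≤ x) :
    0 ≤ invGammaPDF s c x := by
  unfold invGammaPDF
  positivity

lemma rpow_mul_invGammaPDF (s c r : ℝ) {x : ℝ} (hx : 0 < x) :
    x ^ r * invGammaPDF s c x = c ^ s / Gamma s * (x ^ (-(s - r + 1)) * exp (-c / x)) := by
  have hpow : x ^ r * x ^ (-(s + 1)) = x ^ (-(s - r + 1)) := by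
    rw [← rpow_add hx]; ring_nf
  rw [invGammaPDF, ← hpow]
  ring

section Moments

variable {s c r : ℝ}

lemma integrableOn_rpow_mul_invGammaPDF (hc : 0 < c) (hr : r < s) :
    IntegrableOn (fun x => x ^ r * invGammaPDF s c x) (Ioi 0) :=
  IntegrableOn.congr_fun ((integrableOn_rpow_neg_mul_exp_neg_div (sub_pos.2 hr) hc).const_mul _)
    (fun _ hx => (rpow_mul_invGammaPDF s c r hx).symm) measurableSet_Ioi

lemma integral_rpow_mul_invGammaPDF (hc : 0 < c) (hr : r < s) :
    ∫ x in Ioi 0, x ^ r * invGammaPDF s c x = c ^ r * Gamma (s - r) / Gamma s := by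
  rw [setIntegral_congr_fun measurableSet_Ioi (fun _ hx => rpow_mul_invGammaPDF s c r hx),
    integral_const_mul, integral_rpow_neg_mul_exp_neg_div (sub_pos.2 hr) hc]
  calc c ^ s / Gamma s * (Gamma (s - r) / c ^ (s - r))
      = c ^ s / c ^ (s - r) * Gamma (s - r) / Gamma s := by ring
    _ = c ^ r * Gamma (s - r) / Gamma s := by rw [← rpow_sub hc, sub_sub_cancel]

end Moments

lemma integral_invGammaPDF_mul {s c : ℝ} (hs : 1 < s) (hc : 0 < c) (α β γ : ℝ) :
    IntegrableOn (fun x => invGammaPDF s c x * (α + β * x⁻¹ + γ * x)) (Ioi 0) ∧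
    ∫ x in Ioi 0, invGammaPDF s c x * (α + β * x⁻¹ + γ * x) =
      α + β * (s / c) + γ * (c / (s - 1)) := by
  set f := invGammaPDF s c
  have hsplit : EqOn (fun x => f x * (α + β * x⁻¹ + γ * x))
      (fun x => α * (x ^ (0 : ℝ) * f x) + β * (x ^ (-1 : ℝ) * f x) + γ * (x ^ (1 : ℝ) * f x))
      (Ioi 0) := by
    intro x _
    simp only [rpow_zero, rpow_neg_one, rpow_one]
    ring
  have h0 := integrableOn_rpow_mul_invGammaPDF hc (show (0 : ℝ) < s by linarith)
  have h1 := integrableOn_rpow_mul_invGammaPDF hc (show (-1 : ℝ) < s by linarith)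
  have h2 := integrableOn_rpow_mul_invGammaPDF hc hs
  have h01 : IntegrableOn (fun x => α * (x ^ (0 : ℝ) * f x) + β * (x ^ (-1 : ℝ) * f x)) (Ioi 0) :=
    (h0.const_mul α).add (h1.const_mul β)
  have h012 : IntegrableOn (fun x => α * (x ^ (0 : ℝ) * f x) + β * (x ^ (-1 : ℝ) * f x) +
      γ * (x ^ (1 : ℝ) * f x)) (Ioi 0) := h01.add (h2.const_mul γ)
  refine ⟨h012.congr_fun hsplit.symm measurableSet_Ioi, ?_⟩
  rw [setIntegral_congr_fun measurableSet_Ioi hsplit, integral_add h01 (h2.const_mul γ),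
    integral_add (h0.const_mul α) (h1.const_mul β), integral_const_mul, integral_const_mul,
    integral_const_mul, integral_rpow_mul_invGammaPDF hc (by linarith),
    integral_rpow_mul_invGammaPDF hc (by linarith), integral_rpow_mul_invGammaPDF hc hs]
  have hs1 : s - 1 ≠ 0 := by linarith
  have hΓ : Gamma (s - 1) ≠ 0 := (Gamma_pos_of_pos (by linarith)).ne'
  have hΓs : Gamma s = (s - 1) * Gamma (s - 1) := by
    rw [← Gamma_add_one hs1, sub_add_cancel]
  rw [sub_zero, sub_neg_eq_add, Gamma_add_one (by linarith), rpow_zero, rpow_neg_one, rpow_one,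
    hΓs]
  field_simp

lemma hasDerivAt_invGammaPDF {ν ω : ℝ → ℝ} {ν' ω' t x : ℝ} (hν : HasDerivAt ν ν' t)
    (hω : HasDerivAt ω ω' t) (hν0 : 0 < ν t) (hω0 : 0 < ω t) (hx : 0 < x) :
    HasDerivAt (fun τ => invGammaPDF (ν τ) (ω τ) x)
      (invGammaPDF (ν t) (ω t) x *
        (ν' * (log (ω t) - digamma (ν t) - log x) + ω' * (ν t / ω t - x⁻¹))) t := by
  have hΓ0 : 0 < Gamma (ν t) := Gamma_pos_of_pos hν0
  have hΓ : HasDerivAt (fun τ => Gamma (ν τ)) (deriv Gamma (ν t) * ν') t :=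
    (differentiableAt_Gamma fun m hm => by linarith [hm ▸ hν0, (Nat.cast_nonneg m : (0 : ℝ) ≤ m)]
      ).hasDerivAt.comp t hν
  have hscale := ((hω.rpow hν hω0).div hΓ hΓ0.ne')
  have hpow := ((hν.add_const 1).neg).const_rpow (a := x) hx
  have hexp := (hω.neg.div_const x).exp
  refine ((hscale.mul hpow).mul hexp).congr_deriv ?_
  simp only [invGammaPDF, digamma, Pi.mul_apply, Pi.div_apply, Pi.neg_apply]
  rw [rpow_sub hω0, rpow_one]
  field_simp
  ring

lemma abs_mul_sub_log_add_mul_sub_inv_le (p q L a : ℝ) (ha : 0 ≤ a) {x : ℝ} (hx : 0 < x) :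
    |p * (L - log x) + q * (a - x⁻¹)| ≤
      (|p| * |L| + |q| * a) + (|p| / exp 1 + |q|) * x⁻¹ + |p| * x := by
  have hlog := abs_log_le_inv_div_exp_add_self hx
  have hinv : |a - x⁻¹| ≤ a + x⁻¹ := by
    simpa [abs_of_nonneg ha, abs_of_pos (inv_pos.2 hx)] using abs_sub a x⁻¹
  calc |p * (L - log x) + q * (a - x⁻¹)|
      ≤ |p| * |L - log x| + |q| * |a - x⁻¹| := by
        rw [← abs_mul, ← abs_mul]; exact abs_add_le _ _
    _ ≤ |p| * (|L| + |log x|) + |q| * (a + x⁻¹) := by gcongr; exact abs_sub _ _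
    _ ≤ |p| * (|L| + (x⁻¹ / exp 1 + x)) + |q| * (a + x⁻¹) := by gcongr
    _ = _ := by ring

/-- `L¹` bound on the time derivative of a time-dependent inverse Gamma density with shape
`ν(t) > 1` and scale `ω(t) > 0`:
`∫₀^∞ |∂ₜ h(x,t)| dx ≤ |ν'(t)| A(t) + |ω'(t)| B(t)`, where
`A(t) = |log ω(t) − ψ(ν(t))| + 1 + ν(t)/(e ω(t)) + ω(t)/(ν(t) − 1)` and
`B(t) = 2 ν(t)/ω(t)`. -/
theorem inverse_gamma_time_derivative_L1_bound
    (ν ω ν' ω' : ℝ → ℝ)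
    (hν1 : ∀ t ≥ (0:ℝ), 1 < ν t) (hωpos : ∀ t ≥ (0:ℝ), 0 < ω t)
    (hν : ∀ t ≥ (0:ℝ), HasDerivAt ν (ν' t) t) (hω : ∀ t ≥ (0:ℝ), HasDerivAt ω (ω' t) t)
    (t : ℝ) (ht : 0 ≤ t) :
    ∫ x in Set.Ioi (0:ℝ),
        |deriv (fun τ => ω τ ^ ν τ / Real.Gamma (ν τ) * x ^ (-(ν τ + 1)) *
          Real.exp (-ω τ / x)) t| ≤
      |ν' t| * (|Real.log (ω t) - digamma (ν t)| + 1 + ν t / (Real.exp 1 * ω t) +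
          ω t / (ν t - 1)) +
        |ω' t| * (2 * ν t / ω t) := by
  have hν1t := hν1 t ht
  have hωt := hωpos t ht
  set L := log (ω t) - digamma (ν t)
  obtain ⟨hint, hval⟩ := integral_invGammaPDF_mul hν1t hωt
    (|ν' t| * |L| + |ω' t| * (ν t / ω t)) (|ν' t| / exp 1 + |ω' t|) |ν' t|
  have hbound (x : ℝ) (hx : x ∈ Ioi 0) : |deriv (fun τ => invGammaPDF (ν τ) (ω τ) x) t| ≤
      invGammaPDF (ν t) (ω t) x * ((|ν' t| * |L| + |ω' t| * (ν t / ω t)) +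
        (|ν' t| / exp 1 + |ω' t|) * x⁻¹ + |ν' t| * x) := by
    have hf := invGammaPDF_nonneg (by linarith : 0 ≤ ν t) hωt.le (le_of_lt hx)
    rw [(hasDerivAt_invGammaPDF (hν t ht) (hω t ht) (by linarith) hωt hx).deriv, abs_mul,
      abs_of_nonneg hf]
    exact mul_le_mul_of_nonneg_left
      (abs_mul_sub_log_add_mul_sub_inv_le _ _ _ _ (by positivity) hx) hf
  calc _ ≤ _ := setIntegral_mono_of_nonneg (fun _ _ => abs_nonneg _) hbound hint
    _ = _ := hval
    _ ≤ _ := by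
      have hgap : |ν' t| * (|L| + 1 + ν t / (exp 1 * ω t) + ω t / (ν t - 1)) +
          |ω' t| * (2 * ν t / ω t) = (|ν' t| * |L| + |ω' t| * (ν t / ω t)) +
          (|ν' t| / exp 1 + |ω' t|) * (ν t / ω t) + |ν' t| * (ω t / (ν t - 1)) + |ν' t| := by
        ring
      linarith [abs_nonneg (ν' t)]
end

section
/- Let p be a real number with 1/2 < p < 3/2, let a : ℝ → ℝ be continuously differentiable with compact support, and suppose there exists K > 0 with |a(ξ)| ≤ K|ξ| for all ξ ∈ ℝ. Then the Hardy-type inequality ∫_ℝ |ξ|^{2−2p} a'(ξ)² dξ ≥ ((2p−1)²/4) ∫_ℝ |ξ|^{−2p} a(ξ)² dξ holds. -/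
/-!
On the half-line, expand `0 ≤ ∫ x^{-2p} (x a'(x) - c a(x))²` with `c = (2p-1)/2`. The cross
term `∫ x^{1-2p} a a'` equals `c ∫ x^{-2p} a²` by integrating the derivative of `x^{1-2p} a(x)²`,
whose boundary terms vanish because `|a(x)| ≤ K x` near `0` and `a` has compact support; the same
bound with `p < 3/2` makes every integrand `O(x^{2-2p})` at `0`, hence integrable. What is left
is `∫ x^{2-2p} a'² - c² ∫ x^{-2p} a² ≥ 0`. The negative half-line is the positive one for
`a(-x)`.
-/

open Real MeasureTheory Set Filter Topology

theorem integral_eq_integral_Ioi_add_integral_Ioi_comp_neg {E : Type*}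
    [NormedAddCommGroup E] [NormedSpace ℝ E] {f : ℝ → E} (hpos : IntegrableOn f (Ioi 0))
    (hneg : IntegrableOn (fun x => f (-x)) (Ioi 0)) :
    ∫ x, f x = (∫ x in Ioi 0, f x) + ∫ x in Ioi 0, f (-x) := by
  have hIic : IntegrableOn f (Iic 0) := by
    have hneg_emb : MeasurableEmbedding fun x : ℝ => -x :=
      (Homeomorph.neg ℝ).measurableEmbedding
    rw [← Measure.map_neg_eq_self (volume : Measure ℝ), hneg_emb.integrableOn_map_iff]
    simpa [Function.comp_def, integrableOn_Ici_iff_integrableOn_Ioi] using hneg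
  rw [integral_comp_neg_Ioi, neg_zero, ← intervalIntegral.integral_Iic_add_Ioi hIic hpos,
    add_comm]

theorem integral_abs_rpow_mul_eq {s : ℝ} {f : ℝ → ℝ}
    (hpos : IntegrableOn (fun x => x ^ s * f x) (Ioi 0))
    (hneg : IntegrableOn (fun x => x ^ s * f (-x)) (Ioi 0)) :
    ∫ x, |x| ^ s * f x = (∫ x in Ioi 0, x ^ s * f x) + ∫ x in Ioi 0, x ^ s * f (-x) := by
  have habs : EqOn (fun x => |x| ^ s * f x) (fun x => x ^ s * f x) (Ioi 0) :=
    fun x (hx : 0 < x) => by simp only [abs_of_pos hx]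
  have habs_neg : EqOn (fun x => |-x| ^ s * f (-x)) (fun x => x ^ s * f (-x)) (Ioi 0) :=
    fun x (hx : 0 < x) => by simp only [abs_neg, abs_of_pos hx]
  rw [integral_eq_integral_Ioi_add_integral_Ioi_comp_neg
      ((integrableOn_congr_fun habs measurableSet_Ioi).2 hpos)
      ((integrableOn_congr_fun habs_neg measurableSet_Ioi).2 hneg),
    setIntegral_congr_fun measurableSet_Ioi habs, setIntegral_congr_fun measurableSet_Ioi habs_neg]

theorem integrableOn_Ioi_of_abs_le_rpow {g : ℝ → ℝ} {r D : ℝ} (hr : -1 < r)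
    (hg : ContinuousOn g (Ioi 0)) (hsupp : HasCompactSupport g)
    (hbound : ∀ x ∈ Ioi (0 : ℝ), |g x| ≤ D * x ^ r) : IntegrableOn g (Ioi 0) := by
  obtain ⟨M, hM⟩ := hsupp.isCompact.bddAbove
  have hIoc : IntegrableOn g (Ioc 0 M) := by
    exact Integrable.mono' ((intervalIntegral.intervalIntegrable_rpow' hr).const_mul D).1
      ((hg.mono Ioc_subset_Ioi_self).aestronglyMeasurable measurableSet_Ioc)
      ((ae_restrict_iff' measurableSet_Ioc).2 (.of_forall fun x hx => hbound x hx.1))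
  refine hIoc.of_forall_sdiff_eq_zero measurableSet_Ioi fun x hx => ?_
  exact image_eq_zero_of_notMem_tsupport fun hmem => hx.2 ⟨hx.1, hM hmem⟩

section HalfLine

variable {p K : ℝ} {a : ℝ → ℝ}

theorem rpow_neg_two_mul_mul_sq_le (hbound : ∀ x, |a x| ≤ K * |x|) {x : ℝ} (hx : 0 < x) :
    x ^ (-(2 * p)) * a x ^ 2 ≤ K ^ 2 * x ^ (2 - 2 * p) := by
  have hsq : a x ^ 2 ≤ (K * x) ^ 2 := by
    simpa only [sq_abs, abs_of_pos hx] using pow_le_pow_left₀ (abs_nonneg _) (hbound x) 2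
  calc x ^ (-(2 * p)) * a x ^ 2 ≤ x ^ (-(2 * p)) * (K * x) ^ 2 := by gcongr
    _ = K ^ 2 * x ^ (-(2 * p) + (2 : ℕ)) := by rw [rpow_add_natCast hx.ne']; ring
    _ = K ^ 2 * x ^ (2 - 2 * p) := by ring_nf

theorem integrableOn_rpow_mul_sq (hp : p < 3 / 2) (ha : Continuous a)
    (hsupp : HasCompactSupport a) (hbound : ∀ x, |a x| ≤ K * |x|) :
    IntegrableOn (fun x => x ^ (-(2 * p)) * a x ^ 2) (Ioi 0) := by
  refine integrableOn_Ioi_of_abs_le_rpow (r := 2 - 2 * p) (D := K ^ 2) (by linarith)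
    (by fun_prop (disch := intros; simp_all [ne_of_gt]))
    (HasCompactSupport.mul_left (hsupp.comp_left (g := fun y => y ^ 2) (zero_pow two_ne_zero)))
    fun x (hx : 0 < x) => ?_
  rw [abs_of_nonneg (by positivity)]
  exact rpow_neg_two_mul_mul_sq_le hbound hx

theorem integrableOn_rpow_mul_deriv_sq (hp : p < 3 / 2) (ha : ContDiff ℝ 1 a)
    (hsupp : HasCompactSupport a) :
    IntegrableOn (fun x => x ^ (2 - 2 * p) * deriv a x ^ 2) (Ioi 0) := by
  have hda := ha.continuous_deriv le_rfl
  obtain ⟨C, hC⟩ := hda.bounded_above_of_compact_support hsupp.deriv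
  refine integrableOn_Ioi_of_abs_le_rpow (r := 2 - 2 * p) (D := C ^ 2) (by linarith)
    (by fun_prop (disch := intros; simp_all [ne_of_gt]))
    (HasCompactSupport.mul_left
      (hsupp.deriv.comp_left (g := fun y => y ^ 2) (zero_pow two_ne_zero)))
    fun x (hx : 0 < x) => ?_
  rw [abs_of_nonneg (by positivity), mul_comm]
  have hC' : |deriv a x| ≤ |C| := (hC x).trans (le_abs_self C)
  exact mul_le_mul_of_nonneg_right (sq_le_sq.2 hC') (by positivity)

theorem integrableOn_rpow_mul_mul_deriv (hp : p < 3 / 2) (ha : ContDiff ℝ 1 a)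
    (hsupp : HasCompactSupport a) (hbound : ∀ x, |a x| ≤ K * |x|) :
    IntegrableOn (fun x => x ^ (1 - 2 * p) * a x * deriv a x) (Ioi 0) := by
  have hda := ha.continuous_deriv le_rfl
  have hac := ha.continuous
  obtain ⟨C, hC⟩ := hda.bounded_above_of_compact_support hsupp.deriv
  refine integrableOn_Ioi_of_abs_le_rpow (r := 2 - 2 * p) (D := K * C) (by linarith)
    (by fun_prop (disch := intros; simp_all [ne_of_gt])) hsupp.mul_left.mul_right
    fun x (hx : 0 < x) => ?_
  have hax : |a x| ≤ K * x := by simpa only [abs_of_pos hx] using hbound x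
  have hK : 0 ≤ K := by simpa using (abs_nonneg (a 1)).trans (hbound 1)
  calc |x ^ (1 - 2 * p) * a x * deriv a x| = x ^ (1 - 2 * p) * |a x| * |deriv a x| := by
        rw [abs_mul, abs_mul, abs_of_nonneg (by positivity)]
    _ ≤ x ^ (1 - 2 * p) * (K * x) * C := by gcongr; exact hC x
    _ = K * C * x ^ (1 - 2 * p + 1) := by rw [rpow_add_one hx.ne']; ring
    _ = K * C * x ^ (2 - 2 * p) := by ring_nf

theorem continuousWithinAt_rpow_mul_sq (hp : p < 3 / 2) (hbound : ∀ x, |a x| ≤ K * |x|) :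
    ContinuousWithinAt (fun x => x ^ (1 - 2 * p) * a x ^ 2) (Ici 0) 0 := by
  have ha0 : a 0 = 0 := by simpa using hbound 0
  rw [ContinuousWithinAt, ha0, zero_pow two_ne_zero, mul_zero]
  refine squeeze_zero_norm' (a := fun x => K ^ 2 * x ^ (3 - 2 * p)) ?_ ?_
  · filter_upwards [self_mem_nhdsWithin] with x (hx : 0 ≤ x)
    rcases hx.eq_or_lt with rfl | hx
    · rw [ha0, zero_pow two_ne_zero, mul_zero, norm_zero]; positivity
    calc ‖x ^ (1 - 2 * p) * a x ^ 2‖ = x * (x ^ (-(2 * p)) * a x ^ 2) := by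
          rw [norm_of_nonneg (by positivity), show 1 - 2 * p = -(2 * p) + 1 by ring,
            rpow_add_one hx.ne']
          ring
      _ ≤ x * (K ^ 2 * x ^ (2 - 2 * p)) :=
          mul_le_mul_of_nonneg_left (rpow_neg_two_mul_mul_sq_le hbound hx) hx.le
      _ = K ^ 2 * x ^ (3 - 2 * p) := by
          rw [show (3 : ℝ) - 2 * p = 2 - 2 * p + 1 by ring, rpow_add_one hx.ne']; ring
  · have hcont : ContinuousAt (fun x : ℝ => K ^ 2 * x ^ (3 - 2 * p)) 0 :=
      continuousAt_const.mul (continuousAt_rpow_const 0 _ (.inr (by linarith)))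
    simpa [zero_rpow (show 3 - 2 * p ≠ 0 by linarith)] using
      hcont.tendsto.mono_left nhdsWithin_le_nhds

theorem two_mul_integral_rpow_mul_mul_deriv (hp : p < 3 / 2) (ha : ContDiff ℝ 1 a)
    (hsupp : HasCompactSupport a) (hbound : ∀ x, |a x| ≤ K * |x|) :
    2 * ∫ x in Ioi 0, x ^ (1 - 2 * p) * a x * deriv a x =
      (2 * p - 1) * ∫ x in Ioi 0, x ^ (-(2 * p)) * a x ^ 2 := by
  set G : ℝ → ℝ := fun x => x ^ (1 - 2 * p) * a x ^ 2
  have hGderiv : ∀ x ∈ Ioi (0 : ℝ), HasDerivAt G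
      ((1 - 2 * p) * (x ^ (-(2 * p)) * a x ^ 2) + 2 * (x ^ (1 - 2 * p) * a x * deriv a x)) x := by
    intro x (hx : 0 < x)
    have hrpow : HasDerivAt (fun x => x ^ (1 - 2 * p)) ((1 - 2 * p) * x ^ (-(2 * p))) x := by
      simpa using hasDerivAt_rpow_const (p := 1 - 2 * p) (Or.inl hx.ne')
    have hsq := ((ha.differentiable one_ne_zero) x).hasDerivAt.fun_pow 2
    exact (hrpow.mul hsq).congr_deriv (by norm_num; ring)
  have hGtop : Tendsto G atTop (𝓝 0) :=
    (HasCompactSupport.mul_left (hsupp.comp_left (g := fun y => y ^ 2) (zero_pow two_ne_zero))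
      ).is_zero_at_infty.mono_left atTop_le_cocompact
  have ha0 : a 0 = 0 := by simpa using hbound 0
  have hB := integrableOn_rpow_mul_sq hp ha.continuous hsupp hbound
  have hT := integrableOn_rpow_mul_mul_deriv hp ha hsupp hbound
  have hIBP := integral_Ioi_of_hasDerivAt_of_tendsto (continuousWithinAt_rpow_mul_sq hp hbound)
    hGderiv ((hB.const_mul _).add (hT.const_mul 2)) hGtop
  rw [integral_add (hB.const_mul _) (hT.const_mul 2), integral_const_mul, integral_const_mul,
    ha0, zero_pow two_ne_zero, mul_zero, sub_zero] at hIBP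
  linarith

theorem hardy_inequality_Ioi (hp : p < 3 / 2) (ha : ContDiff ℝ 1 a) (hsupp : HasCompactSupport a)
    (hbound : ∀ x, |a x| ≤ K * |x|) :
    (2 * p - 1) ^ 2 / 4 * ∫ x in Ioi 0, x ^ (-(2 * p)) * a x ^ 2 ≤
      ∫ x in Ioi 0, x ^ (2 - 2 * p) * deriv a x ^ 2 := by
  have hB := integrableOn_rpow_mul_sq hp ha.continuous hsupp hbound
  have hT := integrableOn_rpow_mul_mul_deriv hp ha hsupp hbound
  have hA := integrableOn_rpow_mul_deriv_sq hp ha hsupp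
  have hsq : ∀ x ∈ Ioi (0 : ℝ), x ^ (2 - 2 * p) * deriv a x ^ 2
      - (2 * p - 1) * (x ^ (1 - 2 * p) * a x * deriv a x)
      + (2 * p - 1) ^ 2 / 4 * (x ^ (-(2 * p)) * a x ^ 2)
      = x ^ (-(2 * p)) * (x * deriv a x - (2 * p - 1) / 2 * a x) ^ 2 := by
    intro x (hx : 0 < x)
    rw [show 2 - 2 * p = -(2 * p) + (2 : ℕ) by push_cast; ring, rpow_add_natCast hx.ne',
      show 1 - 2 * p = -(2 * p) + 1 by ring, rpow_add_one hx.ne']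
    ring
  have hnonneg := setIntegral_nonneg (μ := volume) measurableSet_Ioi fun x hx =>
    (hsq x hx).symm ▸ mul_nonneg (rpow_nonneg (le_of_lt hx) _) (sq_nonneg _)
  rw [integral_add ?_ (hB.const_mul _), integral_sub hA (hT.const_mul _),
    integral_const_mul, integral_const_mul] at hnonneg
  swap
  · exact hA.sub (hT.const_mul _)
  linear_combination
    hnonneg - (2 * p - 1) / 2 * two_mul_integral_rpow_mul_mul_deriv hp ha hsupp hbound

end HalfLine

theorem hardy_type_inequality_general
    (p : ℝ) (hp2 : p < 3 / 2)
    (a : ℝ → ℝ) (ha : ContDiff ℝ 1 a) (hsupp : HasCompactSupport a)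
    (K : ℝ) (hbound : ∀ ξ : ℝ, |a ξ| ≤ K * |ξ|) :
    ((2 * p - 1) ^ 2 / 4) * ∫ ξ : ℝ, |ξ| ^ (-(2 * p)) * a ξ ^ 2 ≤
      ∫ ξ : ℝ, |ξ| ^ (2 - 2 * p) * deriv a ξ ^ 2 := by
  set b : ℝ → ℝ := fun x => a (-x)
  have hb : ContDiff ℝ 1 b := ha.comp contDiff_neg
  have hbsupp : HasCompactSupport b := hsupp.comp_homeomorph (Homeomorph.neg ℝ)
  have hbbound : ∀ x, |b x| ≤ K * |x| := fun x => by simpa using hbound (-x)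
  have hderiv_b : ∀ x, deriv a (-x) ^ 2 = deriv b x ^ 2 := fun x => by simp [b, deriv_comp_neg]
  rw [integral_abs_rpow_mul_eq (integrableOn_rpow_mul_sq hp2 ha.continuous hsupp hbound)
      (integrableOn_rpow_mul_sq hp2 hb.continuous hbsupp hbbound),
    integral_abs_rpow_mul_eq (f := fun x => deriv a x ^ 2)
      (integrableOn_rpow_mul_deriv_sq hp2 ha hsupp)
      (by simpa only [hderiv_b] using integrableOn_rpow_mul_deriv_sq hp2 hb hbsupp)]
  simp only [hderiv_b, mul_add]
  exact add_le_add (hardy_inequality_Ioi hp2 ha hsupp hbound)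
    (hardy_inequality_Ioi hp2 hb hbsupp hbbound)

/-- Hardy-type coercivity inequality: for `1/2 < p < 3/2` and a `C¹` compactly supported
function `a` with `|a(ξ)| ≤ K|ξ|`, one has
`∫ |ξ|^{2−2p} a'(ξ)² dξ ≥ ((2p−1)²/4) ∫ |ξ|^{−2p} a(ξ)² dξ`. -/
theorem hardy_type_inequality
    (p : ℝ) (hp1 : 1 / 2 < p) (hp2 : p < 3 / 2)
    (a : ℝ → ℝ) (ha : ContDiff ℝ 1 a) (hsupp : HasCompactSupport a)
    (K : ℝ) (hK : 0 < K) (hbound : ∀ ξ : ℝ, |a ξ| ≤ K * |ξ|) :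
    ((2 * p - 1) ^ 2 / 4) * ∫ ξ : ℝ, |ξ| ^ (-(2 * p)) * a ξ ^ 2 ≤
      ∫ ξ : ℝ, |ξ| ^ (2 - 2 * p) * deriv a ξ ^ 2 :=
  hardy_type_inequality_general p hp2 a ha hsupp K hbound
end

section
/- Let u₀ : (0,∞) → ℝ be continuous with compact support contained in (0,∞), and define u(x,t) = ∫₀^∞ (1/z) u₀(x/z) L_t(z) dz for x > 0, t > 0, where L_t(x) = (4πt)^{−1/2} x^{−1} exp(−(log x + t)²/(4t)). Then u is twice continuously differentiable in x and continuously differentiable in t on (0,∞) × (0,∞), and it solves the geometric Brownian motion equation ∂_t u(x,t) = ∂²_x (x² u(x,t)) for all x > 0 and t > 0. -/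
/-!
Substituting `w = x / z` writes `u(x, t) = ∫ u₀(w) w⁻¹ L_t(x / w) dw`, an integral over the
compact set `tsupport u₀ ⊆ (0, ∞)` of a kernel that is smooth in `(t, x)` there, so derivatives
pass under the integral sign. Since `x² w⁻¹ L_t(x/w) = w (x/w)² L_t(x/w)` and every `x`-derivative
of a function of `x / w` brings out a factor `w⁻¹`, the equation reduces to the kernel identity
`∂ₜ L_t(z) = ∂²_z (z² L_t(z))`. Regularity in `x` is proved for `x² u` and transferred to `u`.
-/

open Real MeasureTheory Set

/-- The lognormal density `L_t(x) = (4πt)^{−1/2} x⁻¹ exp(−(log x + t)²/(4t))`. -/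
noncomputable def lognormalDensity (t x : ℝ) : ℝ :=
  (4 * Real.pi * t) ^ (-(1:ℝ) / 2) * x⁻¹ * Real.exp (-(Real.log x + t) ^ 2 / (4 * t))

open Filter Topology

section Calculus

variable {f f' f'' : ℝ → ℝ} {s : Set ℝ}

theorem contDiffOn_one_of_hasDerivAt (hs : IsOpen s) (hf : ∀ x ∈ s, HasDerivAt f (f' x) x)
    (hf' : ContinuousOn f' s) : ContDiffOn ℝ 1 f s := by
  rw [show (1 : WithTop ℕ∞) = (0 : ℕ) + 1 by norm_num, contDiffOn_succ_iff_deriv_of_isOpen hs]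
  refine ⟨fun x hx => (hf x hx).differentiableAt.differentiableWithinAt, by simp, ?_⟩
  simpa using hf'.congr fun x hx => (hf x hx).deriv

theorem contDiffOn_two_of_hasDerivAt (hs : IsOpen s) (hf : ∀ x ∈ s, HasDerivAt f (f' x) x)
    (hf' : ∀ x ∈ s, HasDerivAt f' (f'' x) x) (hf'' : ContinuousOn f'' s) :
    ContDiffOn ℝ 2 f s := by
  rw [show (2 : WithTop ℕ∞) = (1 : ℕ) + 1 by norm_num, contDiffOn_succ_iff_deriv_of_isOpen hs]
  refine ⟨fun x hx => (hf x hx).differentiableAt.differentiableWithinAt, by simp, ?_⟩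
  exact (contDiffOn_one_of_hasDerivAt hs hf' hf'').congr fun x hx => (hf x hx).deriv

theorem deriv_deriv_eq_of_hasDerivAt (hs : IsOpen s) (hf : ∀ x ∈ s, HasDerivAt f (f' x) x)
    (hf' : ∀ x ∈ s, HasDerivAt f' (f'' x) x) {x : ℝ} (hx : x ∈ s) :
    deriv (deriv f) x = f'' x := by
  rw [(eventuallyEq_of_mem (hs.mem_nhds hx) fun y hy => (hf y hy).deriv).deriv_eq]
  exact (hf' x hx).deriv

end Calculus

section ParametricIntegral

variable {X Y : Type*} [TopologicalSpace X] [TopologicalSpace Y] {g : Y → ℝ}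

theorem continuousAt_mul_of_mem_tsupport (hg : Continuous g) {f : X → Y} (hf : Continuous f)
    {F : X → ℝ} {x : X} (hF : f x ∈ tsupport g → ContinuousAt F x) :
    ContinuousAt (fun x => g (f x) * F x) x := by
  by_cases hx : f x ∈ tsupport g
  · exact (hg.comp hf).continuousAt.mul (hF hx)
  · have hzero : ∀ᶠ x' in 𝓝 x, g (f x') = 0 :=
      hf.continuousAt.eventually (notMem_tsupport_iff_eventuallyEq.1 hx)
    exact (continuousAt_const (y := (0 : ℝ))).congr (hzero.mono fun x' hx' => by simp [hx'])

variable [MeasurableSpace Y] [OpensMeasurableSpace Y] {μ : Measure Y} [IsFiniteMeasureOnCompacts μ]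

theorem continuousOn_integral_mul (hg : Continuous g) (hgc : HasCompactSupport g)
    {K : X → Y → ℝ} {s : Set X}
    (hK : ∀ p ∈ s, ∀ y ∈ tsupport g, ContinuousAt (Function.uncurry K) (p, y)) :
    ContinuousOn (fun p => ∫ y, g y * K p y ∂μ) s :=
  continuousOn_integral_of_compact_support hgc
    (fun q hq => (continuousAt_mul_of_mem_tsupport hg continuous_snd
      (hK q.1 hq.1 q.2)).continuousWithinAt)
    (fun p y _ hy => by simp [image_eq_zero_of_notMem_tsupport hy])

theorem hasDerivAt_integral_mul (hg : Continuous g) (hgc : HasCompactSupport g)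
    {K K' : ℝ → Y → ℝ} {s : Set ℝ} (hs : IsOpen s)
    (hK : ∀ p ∈ s, ∀ y ∈ tsupport g, ContinuousAt (K p) y)
    (hK' : ∀ p ∈ s, ∀ y ∈ tsupport g, ContinuousAt (Function.uncurry K') (p, y))
    (hderiv : ∀ p ∈ s, ∀ y ∈ tsupport g, HasDerivAt (K · y) (K' p y) p)
    {p₀ : ℝ} (hp₀ : p₀ ∈ s) :
    HasDerivAt (fun p => ∫ y, g y * K p y ∂μ) (∫ y, g y * K' p₀ y ∂μ) p₀ := by
  obtain ⟨ε, hε, hεs⟩ := Metric.nhds_basis_closedBall.mem_iff.1 (hs.mem_nhds hp₀)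
  have hball : Metric.ball p₀ ε ⊆ s := Metric.ball_subset_closedBall.trans hεs
  have hcont : ∀ p ∈ s, Continuous fun y => g y * K p y := fun p hp =>
    continuous_iff_continuousAt.2 fun y =>
      continuousAt_mul_of_mem_tsupport hg continuous_id (hK p hp y)
  have hcont' : Continuous fun y => g y * K' p₀ y :=
    continuous_iff_continuousAt.2 fun y => continuousAt_mul_of_mem_tsupport hg continuous_id
      fun hy => (hK' p₀ hp₀ y hy).comp (f := fun y => (p₀, y)) (by fun_prop)
  obtain ⟨C, hC⟩ := ((isCompact_closedBall p₀ ε).prod hgc).exists_bound_of_continuousOn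
    (f := Function.uncurry K') fun q hq => (hK' q.1 (hεs hq.1) q.2 hq.2).continuousWithinAt
  refine (hasDerivAt_integral_of_dominated_loc_of_deriv_le (bound := fun y => |g y| * C)
    (F := fun p y => g y * K p y) (F' := fun p y => g y * K' p y)
    (Metric.ball_mem_nhds p₀ hε) ?_ ((hcont p₀ hp₀).integrable_of_hasCompactSupport hgc.mul_right)
    hcont'.aestronglyMeasurable ?_ ((hg.integrable_of_hasCompactSupport hgc).abs.mul_const C)
    ?_).2
  · filter_upwards [hs.mem_nhds hp₀] with p hp using (hcont p hp).aestronglyMeasurable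
  · refine ae_of_all _ fun y p hp => ?_
    by_cases hy : y ∈ tsupport g
    · rw [norm_mul, Real.norm_eq_abs]
      exact mul_le_mul_of_nonneg_left (hC (p, y) ⟨Metric.ball_subset_closedBall hp, hy⟩)
        (abs_nonneg _)
    · simp [image_eq_zero_of_notMem_tsupport hy]
  · refine ae_of_all _ fun y p hp => ?_
    by_cases hy : y ∈ tsupport g
    · exact (hderiv p (hball hp) y hy).const_mul (g y)
    · simpa [image_eq_zero_of_notMem_tsupport hy] using hasDerivAt_const p (0 : ℝ)

end ParametricIntegral

section Dilation

variable {μ : Measure ℝ} [IsFiniteMeasureOnCompacts μ] {g h G G' : ℝ → ℝ}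

theorem hasDerivAt_integral_mul_comp_div (hg : Continuous g) (hgc : HasCompactSupport g)
    (hg₀ : tsupport g ⊆ Ioi 0) (hh : ∀ w > 0, ContinuousAt h w)
    (hG : ∀ z > 0, HasDerivAt G (G' z) z) (hG' : ∀ z > 0, ContinuousAt G' z)
    {x : ℝ} (hx : 0 < x) :
    HasDerivAt (fun x => ∫ w, g w * (h w * G (x / w)) ∂μ)
      (∫ w, g w * (h w * w⁻¹ * G' (x / w)) ∂μ) x := by
  refine hasDerivAt_integral_mul hg hgc isOpen_Ioi (K := fun x w => h w * G (x / w))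
    (K' := fun x w => h w * w⁻¹ * G' (x / w)) (fun p hp w hw => ?_) (fun p hp w hw => ?_)
    (fun p hp w hw => ?_) hx
  all_goals
    have hw₀ : 0 < w := hg₀ hw
    have hpw : 0 < p / w := div_pos hp hw₀
  · have := (hG _ hpw).continuousAt
    have := hh w hw₀
    fun_prop (disch := exact hw₀.ne')
  · have := hG' _ hpw
    have := hh w hw₀
    simp only [Function.uncurry_def]
    fun_prop (disch := exact hw₀.ne')
  · refine (((hG _ hpw).comp p ((hasDerivAt_id' p).div_const w)).const_mul (h w)).congr_deriv ?_
    ring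

end Dilation

theorem integral_Ioi_inv_smul_comp_div {E : Type*} [NormedAddCommGroup E] [NormedSpace ℝ E]
    (f : ℝ → E) {c : ℝ} (hc : 0 < c) :
    ∫ w in Ioi 0, w⁻¹ • f (c / w) = ∫ z in Ioi 0, z⁻¹ • f z := by
  have himage : (c / ·) '' Ioi 0 = Ioi (0 : ℝ) := by
    refine (image_subset_iff.2 fun w hw => div_pos hc hw).antisymm fun z hz => ?_
    exact ⟨c / z, div_pos hc hz, div_div_cancel₀ hc.ne'⟩
  have hderiv : ∀ w ∈ Ioi (0 : ℝ), HasDerivWithinAt (c / ·) (-(c / w ^ 2)) (Ioi 0) w := fun w hw =>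
    (((hasDerivAt_inv (ne_of_gt hw)).const_mul c).congr_deriv (by field_simp)).hasDerivWithinAt
  have hinj : InjOn (c / ·) (Ioi (0 : ℝ)) := fun w₁ _ w₂ _ h => by
    simpa [div_eq_mul_inv, hc.ne'] using h
  conv_rhs => rw [← himage, integral_image_eq_integral_abs_deriv_smul measurableSet_Ioi hderiv hinj]
  refine setIntegral_congr_fun measurableSet_Ioi fun w (hw : 0 < w) => ?_
  rw [smul_smul, abs_neg, abs_of_pos (by positivity)]
  congr 1
  field_simp

noncomputable def lognormalDensityTimeDeriv (t z : ℝ) : ℝ :=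
  lognormalDensity t z * (((log z + t) / (2 * t)) ^ 2 - (log z + t) / (2 * t) - 1 / (2 * t))

section Kernel

variable {t z : ℝ}

theorem hasDerivAt_lognormalDensity_time (ht : 0 < t) :
    HasDerivAt (fun τ => lognormalDensity τ z) (lognormalDensityTimeDeriv t z) t := by
  have hpos : 0 < 4 * π * t := by positivity
  have hnorm : HasDerivAt (fun τ => (4 * π * τ) ^ (-(1:ℝ) / 2))
      ((4 * π * t) ^ (-(1:ℝ) / 2) * (-1 / (2 * t))) t := by
    refine (((hasDerivAt_id' t).const_mul (4 * π)).rpow_const (p := -(1:ℝ) / 2)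
      (Or.inl hpos.ne')).congr_deriv ?_
    rw [rpow_sub hpos, rpow_one]
    field_simp
  have hexp : HasDerivAt (fun τ => -(log z + τ) ^ 2 / (4 * τ))
      ((-(2 * (log z + t) * (4 * t)) + (log z + t) ^ 2 * 4) / (4 * t) ^ 2) t := by
    refine ((((hasDerivAt_id' t).const_add (log z)).pow 2).neg.div
      ((hasDerivAt_id' t).const_mul 4) (by positivity)).congr_deriv ?_
    simp only [Pi.neg_apply, Pi.pow_apply]
    ring
  refine ((hnorm.mul_const z⁻¹).mul hexp.exp).congr_deriv ?_
  unfold lognormalDensityTimeDeriv lognormalDensity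
  field_simp
  ring

theorem hasDerivAt_lognormalDensity (ht : t ≠ 0) (hz : z ≠ 0) :
    HasDerivAt (lognormalDensity t)
      (-lognormalDensity t z * z⁻¹ * (1 + (log z + t) / (2 * t))) z := by
  have hexp : HasDerivAt (fun z => -(log z + t) ^ 2 / (4 * t))
      (-(2 * (log z + t) * z⁻¹) / (4 * t)) z := by
    refine ((((hasDerivAt_log hz).add_const t).pow 2).neg.div_const (4 * t)).congr_deriv ?_
    ring
  refine (((hasDerivAt_inv hz).const_mul ((4 * π * t) ^ (-(1:ℝ) / 2))).mul
    hexp.exp).congr_deriv ?_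
  unfold lognormalDensity
  field_simp
  ring

theorem hasDerivAt_sq_mul_lognormalDensity (ht : t ≠ 0) (hz : z ≠ 0) :
    HasDerivAt (fun z => z ^ 2 * lognormalDensity t z)
      (z * lognormalDensity t z * (1 - (log z + t) / (2 * t))) z := by
  refine ((hasDerivAt_pow 2 z).mul (hasDerivAt_lognormalDensity ht hz)).congr_deriv ?_
  field_simp
  ring

theorem hasDerivAt_deriv_sq_mul_lognormalDensity (ht : t ≠ 0) (hz : z ≠ 0) :
    HasDerivAt (fun z => z * lognormalDensity t z * (1 - (log z + t) / (2 * t)))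
      (lognormalDensityTimeDeriv t z) z := by
  refine (((hasDerivAt_id' z).mul (hasDerivAt_lognormalDensity ht hz)).mul
    ((((hasDerivAt_log hz).add_const t).div_const (2 * t)).const_sub 1)).congr_deriv ?_
  unfold lognormalDensityTimeDeriv
  simp only [Pi.mul_apply]
  field_simp
  ring

theorem continuousAt_lognormalDensity (ht : 0 < t) (hz : z ≠ 0) :
    ContinuousAt (Function.uncurry lognormalDensity) (t, z) := by
  have : 4 * π * t ≠ 0 := by positivity
  unfold lognormalDensity Function.uncurry
  fun_prop (disch := simp [*, ht.ne'])

theorem continuousAt_lognormalDensityTimeDeriv (ht : 0 < t) (hz : z ≠ 0) :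
    ContinuousAt (Function.uncurry lognormalDensityTimeDeriv) (t, z) := by
  have hL := continuousAt_lognormalDensity ht hz
  simp only [Function.uncurry_def] at hL
  unfold lognormalDensityTimeDeriv Function.uncurry
  fun_prop (disch := simp [*, ht.ne'])

end Kernel

noncomputable def lognormalConv (u₀ : ℝ → ℝ) (x t : ℝ) : ℝ :=
  ∫ z in Ioi (0 : ℝ), (1 / z) * u₀ (x / z) * lognormalDensity t z

noncomputable def lognormalConvTimeDeriv (u₀ : ℝ → ℝ) (x t : ℝ) : ℝ :=
  ∫ w, u₀ w * (w⁻¹ * lognormalDensityTimeDeriv t (x / w))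

section Solution

variable {u₀ : ℝ → ℝ} {x t : ℝ}

theorem lognormalConv_eq_integral (hu₀ : tsupport u₀ ⊆ Ioi 0) (hx : 0 < x) :
    lognormalConv u₀ x t = ∫ w, u₀ w * (w⁻¹ * lognormalDensity t (x / w)) := by
  calc lognormalConv u₀ x t = ∫ z in Ioi 0, z⁻¹ • (u₀ (x / z) * lognormalDensity t z) := by
        simp only [lognormalConv, one_div, smul_eq_mul, mul_assoc]
    _ = ∫ w in Ioi 0, w⁻¹ • (u₀ (x / (x / w)) * lognormalDensity t (x / w)) :=
        (integral_Ioi_inv_smul_comp_div _ hx).symm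
    _ = ∫ w in Ioi 0, u₀ w * (w⁻¹ * lognormalDensity t (x / w)) := by
        simp only [div_div_cancel₀ hx.ne', smul_eq_mul, mul_left_comm]
    _ = ∫ w, u₀ w * (w⁻¹ * lognormalDensity t (x / w)) :=
        setIntegral_eq_integral_of_forall_compl_eq_zero fun w hw => by
          simp [image_eq_zero_of_notMem_tsupport fun h => hw (hu₀ h)]

theorem sq_mul_lognormalConv_eq_integral (hu₀ : tsupport u₀ ⊆ Ioi 0) (hx : 0 < x) :
    x ^ 2 * lognormalConv u₀ x t =
      ∫ w, u₀ w * (w * ((x / w) ^ 2 * lognormalDensity t (x / w))) := by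
  rw [lognormalConv_eq_integral hu₀ hx, ← integral_const_mul]
  congr 1 with w
  rcases eq_or_ne w 0 with rfl | hw
  · simp
  · field_simp

theorem hasDerivAt_lognormalConv_time (hcont : Continuous u₀) (hsupp : HasCompactSupport u₀)
    (hu₀ : tsupport u₀ ⊆ Ioi 0) (hx : 0 < x) (ht : 0 < t) :
    HasDerivAt (lognormalConv u₀ x) (lognormalConvTimeDeriv u₀ x t) t := by
  rw [show lognormalConv u₀ x = fun τ => ∫ w, u₀ w * (w⁻¹ * lognormalDensity τ (x / w)) from
    funext fun τ => lognormalConv_eq_integral hu₀ hx]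
  refine hasDerivAt_integral_mul hcont hsupp isOpen_Ioi
    (K := fun τ w => w⁻¹ * lognormalDensity τ (x / w))
    (K' := fun τ w => w⁻¹ * lognormalDensityTimeDeriv τ (x / w)) (fun τ hτ w hw => ?_)
    (fun τ hτ w hw => ?_) (fun τ hτ w hw => ?_) ht
  all_goals have hw₀ : 0 < w := hu₀ hw
  · exact (continuousAt_inv₀ hw₀.ne').mul ((continuousAt_lognormalDensity hτ
      (div_pos hx hw₀).ne').comp (f := fun w => (τ, x / w)) (by fun_prop (disch := exact hw₀.ne')))
  · exact (continuousAt_snd.inv₀ hw₀.ne').mul ((continuousAt_lognormalDensityTimeDeriv hτ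
      (div_pos hx hw₀).ne').comp (f := fun q : ℝ × ℝ => (q.1, x / q.2)) (x := (τ, w))
      (by fun_prop (disch := exact hw₀.ne')))
  · exact (hasDerivAt_lognormalDensity_time hτ).const_mul w⁻¹

theorem continuousOn_lognormalConvTimeDeriv (hcont : Continuous u₀)
    (hsupp : HasCompactSupport u₀) (hu₀ : tsupport u₀ ⊆ Ioi 0) :
    ContinuousOn (fun p : ℝ × ℝ => lognormalConvTimeDeriv u₀ p.1 p.2) (Ioi 0 ×ˢ Ioi 0) := by
  refine continuousOn_integral_mul (X := ℝ × ℝ) hcont hsupp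
    (K := fun p w => w⁻¹ * lognormalDensityTimeDeriv p.2 (p.1 / w)) ?_
  intro p hp w hw
  have hw₀ : 0 < w := hu₀ hw
  exact (continuousAt_snd.inv₀ hw₀.ne').mul ((continuousAt_lognormalDensityTimeDeriv hp.2
    (div_pos hp.1 hw₀).ne').comp (f := fun q : (ℝ × ℝ) × ℝ => (q.1.2, q.1.1 / q.2)) (x := (p, w))
    (by fun_prop (disch := exact hw₀.ne')))

theorem hasDerivAt_sq_mul_lognormalConv (hcont : Continuous u₀) (hsupp : HasCompactSupport u₀)
    (hu₀ : tsupport u₀ ⊆ Ioi 0) (ht : 0 < t) (hx : 0 < x) :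
    HasDerivAt (fun y => y ^ 2 * lognormalConv u₀ y t)
      (∫ w, u₀ w * (w * w⁻¹ *
        (x / w * lognormalDensity t (x / w) * (1 - (log (x / w) + t) / (2 * t))))) x := by
  refine HasDerivAt.congr_of_eventuallyEq ?_ (eventually_of_mem (Ioi_mem_nhds hx) fun y hy =>
    sq_mul_lognormalConv_eq_integral hu₀ hy)
  exact hasDerivAt_integral_mul_comp_div hcont hsupp hu₀ (h := fun w => w)
    (fun w _ => continuousAt_id) (fun z hz => hasDerivAt_sq_mul_lognormalDensity ht.ne' hz.ne')
    (fun z hz => (hasDerivAt_deriv_sq_mul_lognormalDensity ht.ne' hz.ne').continuousAt) hx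

theorem hasDerivAt_deriv_sq_mul_lognormalConv (hcont : Continuous u₀)
    (hsupp : HasCompactSupport u₀) (hu₀ : tsupport u₀ ⊆ Ioi 0) (ht : 0 < t) (hx : 0 < x) :
    HasDerivAt (fun y => ∫ w, u₀ w * (w * w⁻¹ *
        (y / w * lognormalDensity t (y / w) * (1 - (log (y / w) + t) / (2 * t)))))
      (lognormalConvTimeDeriv u₀ x t) x := by
  have hQ : ∀ z > 0, ContinuousAt (lognormalDensityTimeDeriv t) z := fun z hz =>
    (continuousAt_lognormalDensityTimeDeriv ht hz.ne').comp (f := fun z => (t, z)) (by fun_prop)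
  refine (hasDerivAt_integral_mul_comp_div hcont hsupp hu₀ (h := fun w => w * w⁻¹)
    (fun w hw => by fun_prop (disch := exact hw.ne'))
    (fun z hz => hasDerivAt_deriv_sq_mul_lognormalDensity ht.ne' hz.ne') hQ hx).congr_deriv ?_
  congr 1 with w
  rcases eq_or_ne w 0 with rfl | hw <;> simp [*]

end Solution

/-- The multiplicative convolution `u(x,t) = ∫₀^∞ (1/z) u₀(x/z) L_t(z) dz` of a continuous
initial datum with compact support contained in `(0,∞)` is `C²` in `x`, `C¹` in `t`, and
solves the geometric Brownian motion equation `∂ₜ u = ∂²ₓ(x² u)` on `(0,∞) × (0,∞)`. -/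
theorem lognormal_convolution_solves_gbm
    (u₀ : ℝ → ℝ) (hcont : Continuous u₀) (hsupp : HasCompactSupport u₀)
    (hsupp_pos : tsupport u₀ ⊆ Set.Ioi 0) :
    (∀ t > (0:ℝ), ContDiffOn ℝ 2
        (fun x => ∫ z in Set.Ioi (0:ℝ), (1 / z) * u₀ (x / z) * lognormalDensity t z)
        (Set.Ioi 0)) ∧
    (∀ x > (0:ℝ), ContDiffOn ℝ 1
        (fun t => ∫ z in Set.Ioi (0:ℝ), (1 / z) * u₀ (x / z) * lognormalDensity t z)
        (Set.Ioi 0)) ∧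
    (∀ x > (0:ℝ), ∀ t > (0:ℝ),
      deriv (fun τ => ∫ z in Set.Ioi (0:ℝ), (1 / z) * u₀ (x / z) * lognormalDensity τ z) t =
        deriv (deriv (fun y =>
          y ^ 2 * ∫ z in Set.Ioi (0:ℝ), (1 / z) * u₀ (y / z) * lognormalDensity t z)) x) := by
  have hsq₁ := fun t (ht : 0 < t) x (hx : x ∈ Ioi (0 : ℝ)) =>
    hasDerivAt_sq_mul_lognormalConv hcont hsupp hsupp_pos ht hx
  have hsq₂ := fun t (ht : 0 < t) x (hx : x ∈ Ioi (0 : ℝ)) =>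
    hasDerivAt_deriv_sq_mul_lognormalConv hcont hsupp hsupp_pos ht hx
  have htime := fun x (hx : 0 < x) t (ht : t ∈ Ioi (0 : ℝ)) =>
    hasDerivAt_lognormalConv_time hcont hsupp hsupp_pos hx ht
  have hcontTime := continuousOn_lognormalConvTimeDeriv hcont hsupp hsupp_pos
  refine ⟨fun t ht => ?_, fun x hx => ?_, fun x hx t ht => ?_⟩
  · have hsq := contDiffOn_two_of_hasDerivAt isOpen_Ioi (hsq₁ t ht) (hsq₂ t ht)
      (hcontTime.comp (f := fun x => (x, t)) (by fun_prop) fun x hx => ⟨hx, ht⟩)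
    refine ((contDiffOn_id.pow 2).inv fun y (hy : 0 < y) => by positivity).mul hsq |>.congr
      fun y (hy : 0 < y) => (inv_mul_cancel_left₀ (pow_ne_zero 2 hy.ne') _).symm
  · exact contDiffOn_one_of_hasDerivAt isOpen_Ioi (htime x hx)
      (hcontTime.comp (f := fun t => (x, t)) (by fun_prop) fun t ht => ⟨hx, ht⟩)
  · exact (htime x hx t ht).deriv.trans
      (deriv_deriv_eq_of_hasDerivAt isOpen_Ioi (hsq₁ t ht) (hsq₂ t ht) hx).symm
end
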